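/- (Theorem 1, convergence error bound.) Let F : ℝ^d → ℝ be L-smooth and μ-strongly convex with global minimizer x*, let η > 0, and set α = 1 − 2μη + Lμη². Suppose the iterates satisfy x_{t+1} = x_t − η·ĝ_t for t = 0, …, T−1, where conditionally on x_t the aggregated gradient ĝ_t satisfies E[ĝ_t | x_t] = ∇F(x_t) and E[‖ĝ_t‖₂² | x_t] ≤ ‖∇F(x_t)‖₂² + σ²/W + d·Ḡ_t²/(4W(2^{b_t−1}−1)²) with deterministic constants Ḡ_t² ≥ 0 and integers b_t ≥ 2. Then E[F(x_T)] − F(x*) ≤ α^T·(F(x_0) − F(x*)) + (Lη²σ²/(2W))·(1 − α^T)/(1 − α) + (Ldη²/(8W))·Σ_{t=0}^{T−1} α^{T−1−t}·Ḡ_t²/(2^{b_t−1}−1)². -/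

import Mathlib

/-!
`L`-smoothness gives the descent inequality `F (x - η g) ≤ F x - η ⟪∇F x, g⟫ + L η² / 2 ‖g‖²`,
and strong convexity the Polyak–Łojasiewicz inequality `2 μ (F x - F x*) ≤ ‖∇F x‖²`.
Taking expectations at `x = x_t`, `g = ĝ_t`, the pull-out property of the conditional
expectation turns `E ⟪∇F x_t, ĝ_t⟫` into `E ‖∇F x_t‖²`, and the second-moment bound controls
`E ‖ĝ_t‖²`. Since `α < 1` forces `L η ≤ 2`, the two combine into the contraction
`e_{t+1} ≤ α e_t + L η² / 2 · noise_t` for `e_t = E F x_t - F x*`; unrolling it and summing the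
geometric series gives the bound.
-/

open MeasureTheory RealInnerProductSpace Finset

lemma ConvexOn.apply_add_fderiv_sub_le {E : Type*} [NormedAddCommGroup E] [NormedSpace ℝ E]
    {s : Set E} {φ : E → ℝ} {φ' : E →L[ℝ] ℝ} {x y : E} (hφ : ConvexOn ℝ s φ)
    (hx : x ∈ s) (hy : y ∈ s) (hφ' : HasFDerivAt φ φ' x) :
    φ x + φ' (y - x) ≤ φ y := by
  have hline := hφ.comp_affineMap (AffineMap.lineMap (k := ℝ) x y)
  have hd : HasDerivAt (φ ∘ AffineMap.lineMap (k := ℝ) x y) (φ' (y - x)) 0 := by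
    rw [← AffineMap.lineMap_apply_zero (k := ℝ) x y] at hφ'
    exact hφ'.comp_hasDerivAt 0 AffineMap.hasDerivAt_lineMap
  have := hline.le_slope_of_hasDerivAt (x := 0) (y := 1) (by simpa using hx) (by simpa using hy)
    zero_lt_one hd
  simp only [slope_def_field, Function.comp_apply, AffineMap.lineMap_apply_zero,
    AffineMap.lineMap_apply_one, sub_zero, div_one] at this
  linarith

section Smooth

variable {E : Type*} [NormedAddCommGroup E] [InnerProductSpace ℝ E] [CompleteSpace E]
  {F : E → ℝ}

lemma lipschitzWith_gradient {L : ℝ}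
    (hL : ∀ x y, ‖gradient F x - gradient F y‖ ≤ L * ‖x - y‖) :
    LipschitzWith L.toNNReal (gradient F) :=
  LipschitzWith.of_dist_le' fun x y => by simpa only [dist_eq_norm] using hL x y

lemma hasDerivAt_apply_add_smul (hF : Differentiable ℝ F) (x v : E) (s : ℝ) :
    HasDerivAt (fun s : ℝ => F (x + s • v)) ⟪gradient F (x + s • v), v⟫ s := by
  have hline : HasDerivAt (fun s : ℝ => x + s • v) v s := by
    simpa using ((hasDerivAt_id s).smul_const v).const_add x
  exact (hF _).hasGradientAt.hasFDerivAt.comp_hasDerivAt s hline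

lemma apply_add_le_of_lipschitz_gradient (hF : Differentiable ℝ F) {L : ℝ}
    (hL : ∀ x y, ‖gradient F x - gradient F y‖ ≤ L * ‖x - y‖) (x v : E) :
    F (x + v) ≤ F x + ⟪gradient F x, v⟫ + L / 2 * ‖v‖ ^ 2 := by
  -- `φ' ≥ 0` on `[0, ∞)` by the Lipschitz bound, and `φ 0 ≤ φ 1` is the claim
  let φ : ℝ → ℝ := fun s => s * ⟪gradient F x, v⟫ + s ^ 2 * (L / 2 * ‖v‖ ^ 2) - F (x + s • v)
  have hφ : ∀ s, HasDerivAt φ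
      (⟪gradient F x, v⟫ + s * (L * ‖v‖ ^ 2) - ⟪gradient F (x + s • v), v⟫) s := fun s => by
    have := (((hasDerivAt_id s).mul_const ⟪gradient F x, v⟫).add
      ((hasDerivAt_pow 2 s).mul_const (L / 2 * ‖v‖ ^ 2))).sub (hasDerivAt_apply_add_smul hF x v s)
    exact this.congr_deriv (by simp only [one_mul, Nat.cast_ofNat]; ring)
  have hφ_nonneg : ∀ s ∈ interior (Set.Ici (0 : ℝ)),
      0 ≤ ⟪gradient F x, v⟫ + s * (L * ‖v‖ ^ 2) - ⟪gradient F (x + s • v), v⟫ := by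
    intro s hs
    rw [interior_Ici] at hs
    have := calc ⟪gradient F (x + s • v), v⟫ - ⟪gradient F x, v⟫
        = ⟪gradient F (x + s • v) - gradient F x, v⟫ := (inner_sub_left _ _ _).symm
      _ ≤ ‖gradient F (x + s • v) - gradient F x‖ * ‖v‖ := real_inner_le_norm _ _
      _ ≤ L * ‖s • v‖ * ‖v‖ := by
          gcongr
          simpa using hL (x + s • v) x
      _ = s * (L * ‖v‖ ^ 2) := by
          rw [norm_smul, Real.norm_of_nonneg (le_of_lt hs)]; ring
    linarith
  have hmono := monotoneOn_of_hasDerivWithinAt_nonneg (convex_Ici 0)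
    (fun s _ => (hφ s).continuousAt.continuousWithinAt) (fun s _ => (hφ s).hasDerivWithinAt)
    hφ_nonneg Set.self_mem_Ici (show (1 : ℝ) ∈ Set.Ici 0 by norm_num) zero_le_one
  simp only [φ, zero_mul, one_mul, one_pow, zero_smul, one_smul, add_zero,
    zero_pow two_ne_zero] at hmono
  linarith

lemma add_inner_gradient_add_le_of_convexOn_sub (hF : Differentiable ℝ F) {μ : ℝ}
    (hconv : ConvexOn ℝ Set.univ fun x => F x - μ / 2 * ⟪x, x⟫) (x y : E) :
    F x + ⟪gradient F x, y - x⟫ + μ / 2 * ‖y - x‖ ^ 2 ≤ F y := by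
  have hd : HasFDerivAt (fun z => F z - μ / 2 * ⟪z, z⟫)
      (InnerProductSpace.toDual ℝ E (gradient F x) - (μ / 2) • (2 • innerSL ℝ x)) x := by
    have := (hasFDerivAt_id x).norm_sq
    simp only [← real_inner_self_eq_norm_sq] at this
    exact (hF x).hasGradientAt.hasFDerivAt.sub (this.const_mul (μ / 2))
  have h := hconv.apply_add_fderiv_sub_le (Set.mem_univ x) (Set.mem_univ y) hd
  have hsq : ⟪y, y⟫ = ⟪x, x⟫ + 2 * ⟪x, y - x⟫ + ‖y - x‖ ^ 2 := by
    rw [← real_inner_self_eq_norm_sq]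
    conv_lhs => rw [show y = x + (y - x) by abel]
    rw [real_inner_add_add_self]
  simp only [sub_apply, smul_apply, smul_eq_mul, nsmul_eq_mul, Nat.cast_ofNat,
    InnerProductSpace.toDual_apply_apply, innerSL_apply_apply] at h
  rw [hsq] at h
  linarith

lemma two_mul_sub_le_norm_gradient_sq (hF : Differentiable ℝ F) {μ : ℝ} (hμ : 0 ≤ μ)
    (hconv : ConvexOn ℝ Set.univ fun x => F x - μ / 2 * ⟪x, x⟫) (x y : E) :
    2 * μ * (F x - F y) ≤ ‖gradient F x‖ ^ 2 := by
  have h := add_inner_gradient_add_le_of_convexOn_sub hF hconv x y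
  -- complete the square: `2μ (F x - F y) ≤ ‖g‖² - ‖g + μ (y - x)‖²` with `g = ∇F x`
  have hsq : ‖gradient F x + μ • (y - x)‖ ^ 2 = ‖gradient F x‖ ^ 2
      + 2 * μ * ⟪gradient F x, y - x⟫ + μ ^ 2 * ‖y - x‖ ^ 2 := by
    rw [norm_add_sq_real, real_inner_smul_right, norm_smul, Real.norm_of_nonneg hμ]; ring
  nlinarith [sq_nonneg ‖gradient F x + μ • (y - x)‖]

end Smooth

theorem LipschitzWith.comp_memLp_of_isFiniteMeasure {α E F : Type*} [MeasurableSpace α]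
    {μ : Measure α} [IsFiniteMeasure μ] [NormedAddCommGroup E] [NormedAddCommGroup F]
    {p : ENNReal} {K : NNReal} {f : α → E} {g : E → F} (hg : LipschitzWith K g)
    (hf : MemLp f p μ) : MemLp (g ∘ f) p μ := by
  have hg0 : LipschitzWith (K + 0) fun x => g x - g 0 := hg.sub (LipschitzWith.const _)
  convert (hg0.comp_memLp (sub_self _) hf).add (memLp_const (g 0)) using 1
  ext; simp

lemma memLp_gradient_comp {Ω E : Type*} [MeasurableSpace Ω] {P : Measure Ω} [IsFiniteMeasure P]
    [NormedAddCommGroup E] [InnerProductSpace ℝ E] [CompleteSpace E] {F : E → ℝ} {L : ℝ}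
    {p : ENNReal} {X : Ω → E} (hL : ∀ x y, ‖gradient F x - gradient F y‖ ≤ L * ‖x - y‖)
    (hX : MemLp X p P) : MemLp (fun ω => gradient F (X ω)) p P :=
  (lipschitzWith_gradient hL).comp_memLp_of_isFiniteMeasure hX

theorem MeasureTheory.MemLp.integrable_inner {Ω E : Type*} [MeasurableSpace Ω] {P : Measure Ω}
    [NormedAddCommGroup E] [InnerProductSpace ℝ E] {f g : Ω → E}
    (hf : MemLp f 2 P) (hg : MemLp g 2 P) : Integrable (fun ω => ⟪f ω, g ω⟫) P :=
  memLp_one_iff_integrable.mp <| hf.of_bilin (fun a b => ⟪a, b⟫) 1 hg (hf.1.inner hg.1)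
    (ae_of_all _ fun ω => by simpa using nnnorm_inner_le_nnnorm (f ω) (g ω))

section Conditional

variable {Ω E : Type*} [NormedAddCommGroup E] [InnerProductSpace ℝ E] [CompleteSpace E]
  {m m₀ : MeasurableSpace Ω} {P : Measure Ω} [IsFiniteMeasure P]

lemma integral_inner_eq_integral_norm_sq_of_condExp_ae_eq (hm : m ≤ m₀) {h g : Ω → E}
    (hh : StronglyMeasurable[m] h) (hh2 : MemLp h 2 P) (hg2 : MemLp g 2 P)
    (hgh : P[g|m] =ᵐ[P] h) :
    ∫ ω, ⟪h ω, g ω⟫ ∂P = ∫ ω, ‖h ω‖ ^ 2 ∂P := by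
  have := isFiniteMeasure_trim (μ := P) hm
  calc ∫ ω, ⟪h ω, g ω⟫ ∂P = ∫ ω, (P[fun ω => ⟪h ω, g ω⟫|m]) ω ∂P := (integral_condExp hm).symm
    _ = ∫ ω, ⟪h ω, (P[g|m]) ω⟫ ∂P := integral_congr_ae <|
        condExp_bilin_of_stronglyMeasurable_left (innerSL ℝ) hh (hh2.integrable_inner hg2)
          (hg2.integrable one_le_two)
    _ = ∫ ω, ‖h ω‖ ^ 2 ∂P := integral_congr_ae <| hgh.mono fun ω hω => by
        simp only [hω, real_inner_self_eq_norm_sq]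

lemma integral_le_integral_of_condExp_ae_le (hm : m ≤ m₀) {f g : Ω → ℝ} (hg : Integrable g P)
    (hfg : P[f|m] ≤ᵐ[P] g) : ∫ ω, f ω ∂P ≤ ∫ ω, g ω ∂P := by
  have := isFiniteMeasure_trim (μ := P) hm
  rw [← integral_condExp hm]
  exact integral_mono_ae integrable_condExp hg hfg

end Conditional

section StochasticGradientStep

variable {Ω E : Type*} [MeasurableSpace Ω] {P : Measure Ω} [IsProbabilityMeasure P]
  [NormedAddCommGroup E] [InnerProductSpace ℝ E] [CompleteSpace E]
  {F : E → ℝ} {L : ℝ} {X G : Ω → E}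

lemma integral_apply_sub_smul_le [MeasurableSpace E] [BorelSpace E] [SecondCountableTopology E]
    (hF : Differentiable ℝ F) (hL0 : 0 ≤ L)
    (hL : ∀ x y, ‖gradient F x - gradient F y‖ ≤ L * ‖x - y‖) {η c : ℝ}
    (hX : Measurable X) (hX2 : MemLp X 2 P) (hG2 : MemLp G 2 P)
    (hFX : Integrable (fun ω => F (X ω)) P) (hFX' : Integrable (fun ω => F (X ω - η • G ω)) P)
    (hGmean : P[G|MeasurableSpace.comap X inferInstance] =ᵐ[P] fun ω => gradient F (X ω))
    (hGsq : P[fun ω => ‖G ω‖ ^ 2|MeasurableSpace.comap X inferInstance]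
      ≤ᵐ[P] fun ω => ‖gradient F (X ω)‖ ^ 2 + c) :
    ∫ ω, F (X ω - η • G ω) ∂P ≤ ∫ ω, F (X ω) ∂P
      - (η - L * η ^ 2 / 2) * ∫ ω, ‖gradient F (X ω)‖ ^ 2 ∂P + L * η ^ 2 / 2 * c := by
  have hgrad2 := memLp_gradient_comp hL hX2
  have hgradm : StronglyMeasurable[MeasurableSpace.comap X inferInstance]
      fun ω => gradient F (X ω) :=
    ((lipschitzWith_gradient hL).continuous.measurable.comp
      (Measurable.of_comap_le le_rfl)).stronglyMeasurable
  have hpointwise : ∀ ω, F (X ω - η • G ω)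
      ≤ F (X ω) - η * ⟪gradient F (X ω), G ω⟫ + L * η ^ 2 / 2 * ‖G ω‖ ^ 2 := fun ω => by
    have := apply_add_le_of_lipschitz_gradient hF hL (X ω) (-(η • G ω))
    rw [← sub_eq_add_neg, inner_neg_right, real_inner_smul_right, norm_neg, norm_smul, mul_pow,
      Real.norm_eq_abs, sq_abs, ← sub_eq_add_neg] at this
    convert this using 2
    ring
  have hinner : ∫ ω, ⟪gradient F (X ω), G ω⟫ ∂P = ∫ ω, ‖gradient F (X ω)‖ ^ 2 ∂P :=
    integral_inner_eq_integral_norm_sq_of_condExp_ae_eq hX.comap_le hgradm hgrad2 hG2 hGmean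
  have hsq : ∫ ω, ‖G ω‖ ^ 2 ∂P ≤ ∫ ω, ‖gradient F (X ω)‖ ^ 2 ∂P + c := by
    simpa [integral_add hgrad2.norm.integrable_sq (integrable_const c)] using
      integral_le_integral_of_condExp_ae_le hX.comap_le
        (hgrad2.norm.integrable_sq.add (integrable_const c)) hGsq
  have hint₁ : Integrable (fun ω => F (X ω) - η * ⟪gradient F (X ω), G ω⟫) P :=
    hFX.sub ((hgrad2.integrable_inner hG2).const_mul η)
  have hint₂ := hG2.norm.integrable_sq.const_mul (L * η ^ 2 / 2)
  calc ∫ ω, F (X ω - η • G ω) ∂P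
      ≤ ∫ ω, (F (X ω) - η * ⟪gradient F (X ω), G ω⟫ + L * η ^ 2 / 2 * ‖G ω‖ ^ 2) ∂P :=
        integral_mono hFX' (hint₁.add hint₂) hpointwise
    _ = ∫ ω, F (X ω) ∂P - η * ∫ ω, ⟪gradient F (X ω), G ω⟫ ∂P
          + L * η ^ 2 / 2 * ∫ ω, ‖G ω‖ ^ 2 ∂P := by
        rw [integral_add hint₁ hint₂, integral_sub hFX ((hgrad2.integrable_inner hG2).const_mul η),
          integral_const_mul, integral_const_mul]
    _ ≤ _ := by
        rw [hinner]
        nlinarith [mul_le_mul_of_nonneg_left hsq (by positivity : 0 ≤ L * η ^ 2 / 2)]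

lemma two_mul_integral_sub_le_integral_norm_gradient_sq (hF : Differentiable ℝ F) {μ : ℝ}
    (hμ : 0 ≤ μ) (hconv : ConvexOn ℝ Set.univ fun x => F x - μ / 2 * ⟪x, x⟫) (y : E)
    (hFX : Integrable (fun ω => F (X ω)) P)
    (hgrad : Integrable (fun ω => ‖gradient F (X ω)‖ ^ 2) P) :
    2 * μ * (∫ ω, F (X ω) ∂P - F y) ≤ ∫ ω, ‖gradient F (X ω)‖ ^ 2 ∂P := by
  calc 2 * μ * (∫ ω, F (X ω) ∂P - F y) = ∫ ω, 2 * μ * (F (X ω) - F y) ∂P := by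
        rw [integral_const_mul, integral_sub hFX (integrable_const _), integral_const,
          probReal_univ, one_smul]
    _ ≤ _ := integral_mono ((hFX.sub (integrable_const _)).const_mul _) hgrad
        fun ω => two_mul_sub_le_norm_gradient_sq hF hμ hconv (X ω) y

lemma integral_apply_sub_smul_sub_le [MeasurableSpace E] [BorelSpace E]
    [SecondCountableTopology E] (hF : Differentiable ℝ F) (hL0 : 0 ≤ L)
    (hL : ∀ x y, ‖gradient F x - gradient F y‖ ≤ L * ‖x - y‖) {μ η c : ℝ} (hμ : 0 ≤ μ)
    (hconv : ConvexOn ℝ Set.univ fun x => F x - μ / 2 * ⟪x, x⟫) (y : E) (hη : 0 ≤ η)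
    (hLη : L * η ≤ 2)
    (hX : Measurable X) (hX2 : MemLp X 2 P) (hG2 : MemLp G 2 P)
    (hFX : Integrable (fun ω => F (X ω)) P) (hFX' : Integrable (fun ω => F (X ω - η • G ω)) P)
    (hGmean : P[G|MeasurableSpace.comap X inferInstance] =ᵐ[P] fun ω => gradient F (X ω))
    (hGsq : P[fun ω => ‖G ω‖ ^ 2|MeasurableSpace.comap X inferInstance]
      ≤ᵐ[P] fun ω => ‖gradient F (X ω)‖ ^ 2 + c) :
    ∫ ω, F (X ω - η • G ω) ∂P - F y
      ≤ (1 - 2 * μ * η + L * μ * η ^ 2) * (∫ ω, F (X ω) ∂P - F y) + L * η ^ 2 / 2 * c := by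
  have hdescent := integral_apply_sub_smul_le hF hL0 hL hX hX2 hG2 hFX hFX' hGmean hGsq
  have hPL := two_mul_integral_sub_le_integral_norm_gradient_sq hF hμ hconv y hFX
    (memLp_gradient_comp hL hX2).norm.integrable_sq
  have hgain : 0 ≤ η - L * η ^ 2 / 2 := by nlinarith
  nlinarith [mul_le_mul_of_nonneg_left hPL hgain]

end StochasticGradientStep

lemma le_pow_mul_add_sum_of_le_mul_add {α : ℝ} (hα : 0 ≤ α) {e c : ℕ → ℝ}
    (h : ∀ t, e (t + 1) ≤ α * e t + c t) (T : ℕ) :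
    e T ≤ α ^ T * e 0 + ∑ t ∈ range T, α ^ (T - 1 - t) * c t := by
  induction T with
  | zero => simp
  | succ T ih =>
    have hshift :
        ∑ t ∈ range T, α ^ (T - t) * c t = α * ∑ t ∈ range T, α ^ (T - 1 - t) * c t := by
      rw [mul_sum]
      refine sum_congr rfl fun t ht => ?_
      rw [← mul_assoc, ← pow_succ', show T - 1 - t + 1 = T - t by grind]
    calc e (T + 1) ≤ α * e T + c T := h T
      _ ≤ α * (α ^ T * e 0 + ∑ t ∈ range T, α ^ (T - 1 - t) * c t) + c T := by gcongr
      _ = _ := by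
        simp only [sum_range_succ, Nat.add_sub_cancel, Nat.sub_self, pow_zero, one_mul, hshift]
        ring

lemma geom_sum_reflect_eq {α : ℝ} (hα : α ≠ 1) (T : ℕ) :
    ∑ t ∈ range T, α ^ (T - 1 - t) = (1 - α ^ T) / (1 - α) := by
  rw [sum_range_reflect (α ^ ·) T, geom_sum_eq hα, div_eq_div_iff (sub_ne_zero.mpr hα)
    (sub_ne_zero.mpr hα.symm)]
  ring

theorem dqsgd_convergence_bound_general {d W : ℕ}
    (F : EuclideanSpace ℝ (Fin d) → ℝ) (hF : Differentiable ℝ F)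
    (L μ η σ : ℝ) (hL0 : 0 < L)
    (hL : ∀ x y, ‖gradient F x - gradient F y‖ ≤ L * ‖x - y‖)
    (hμ : 0 < μ) (hconv : ConvexOn ℝ Set.univ fun x => F x - μ / 2 * ⟪x, x⟫)
    (xstar : EuclideanSpace ℝ (Fin d))
    (hη : 0 < η) (α : ℝ) (hα : α = 1 - 2 * μ * η + L * μ * η ^ 2)
    (hα0 : 0 < α) (hα1 : α < 1)
    (T : ℕ) (b : ℕ → ℕ)
    (Gbarsq : ℕ → ℝ)
    {Ω : Type*} [MeasurableSpace Ω] (P : Measure Ω) [IsProbabilityMeasure P]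
    -- the iterates `x_t` and the aggregated gradients `ĝ_t`
    (X G : Ω → ℕ → EuclideanSpace ℝ (Fin d)) (x0 : EuclideanSpace ℝ (Fin d))
    (hX0 : ∀ ω, X ω 0 = x0)
    (hupdate : ∀ ω t, X ω (t + 1) = X ω t - η • G ω t)
    (hXmeas : ∀ t, Measurable fun ω => X ω t)
    (hGL2 : ∀ t, MemLp (fun ω => G ω t) 2 P)
    (hFX : ∀ t, Integrable (fun ω => F (X ω t)) P)
    (hGmean : ∀ t, P[fun ω => G ω t|MeasurableSpace.comap (fun ω => X ω t) inferInstance]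
      =ᵐ[P] fun ω => gradient F (X ω t))
    (hGsq : ∀ t,
      P[fun ω => ‖G ω t‖ ^ 2|MeasurableSpace.comap (fun ω => X ω t) inferInstance]
        ≤ᵐ[P] fun ω => ‖gradient F (X ω t)‖ ^ 2 + σ ^ 2 / W +
          d * Gbarsq t / (4 * W * ((2 : ℝ) ^ (b t - 1) - 1) ^ 2)) :
    (∫ ω, F (X ω T) ∂P) - F xstar ≤
      α ^ T * (F x0 - F xstar) +
        L * η ^ 2 * σ ^ 2 / (2 * W) * ((1 - α ^ T) / (1 - α)) +
        L * d * η ^ 2 / (8 * W) *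
          ∑ t ∈ range T, α ^ (T - 1 - t) * Gbarsq t / ((2 : ℝ) ^ (b t - 1) - 1) ^ 2 := by
  have hX2 : ∀ t, MemLp (fun ω => X ω t) 2 P := by
    intro t
    induction t with
    | zero => simpa only [hX0] using memLp_const x0
    | succ t ih =>
      simp only [hupdate]
      exact ih.sub ((hGL2 t).const_smul η)
  have hLη : L * η ≤ 2 := by nlinarith [mul_pos hμ hη]
  have hstep : ∀ t, (∫ ω, F (X ω (t + 1)) ∂P) - F xstar ≤ α * ((∫ ω, F (X ω t) ∂P) - F xstar)
      + L * η ^ 2 / 2 * (σ ^ 2 / W + d * Gbarsq t / (4 * W * ((2 : ℝ) ^ (b t - 1) - 1) ^ 2)) :=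
    fun t => by
      simp only [hupdate, hα]
      refine integral_apply_sub_smul_sub_le hF hL0.le hL hμ.le hconv xstar hη.le hLη (hXmeas t)
        (hX2 t) (hGL2 t) (hFX t) (by simpa only [hupdate] using hFX (t + 1)) (hGmean t) ?_
      simpa only [add_assoc] using hGsq t
  calc _ ≤ α ^ T * ((∫ ω, F (X ω 0) ∂P) - F xstar) + ∑ t ∈ range T, α ^ (T - 1 - t) *
        (L * η ^ 2 / 2 * (σ ^ 2 / W + d * Gbarsq t / (4 * W * ((2 : ℝ) ^ (b t - 1) - 1) ^ 2))) :=
        le_pow_mul_add_sum_of_le_mul_add (e := fun t => (∫ ω, F (X ω t) ∂P) - F xstar) hα0.le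
          hstep T
    _ = _ := by
      simp only [hX0, integral_const, probReal_univ, one_smul]
      rw [← geom_sum_reflect_eq hα1.ne, mul_sum, mul_sum, add_assoc, ← sum_add_distrib]
      refine congrArg _ (sum_congr rfl fun t _ => ?_)
      generalize (2 : ℝ) ^ (b t - 1) - 1 = β
      ring

/-- **Theorem 1, convergence error bound.** For `L`-smooth, `μ`-strongly
convex `F` with minimizer `x*`, running quantized distributed SGD
`x_{t+1} = x_t − η·ĝ_t`, where conditionally on `x_t` the aggregated gradient `ĝ_t` is
unbiased with second moment at most
`‖∇F(x_t)‖₂² + σ²/W + d·Ḡ_t²/(4W(2^{b_t−1}−1)²)`, yields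
`E[F(x_T)] − F(x*) ≤ α^T·(F(x_0) − F(x*)) + (Lη²σ²/(2W))·(1 − α^T)/(1 − α)
  + (Ldη²/(8W))·Σ_{t<T} α^{T−1−t}·Ḡ_t²/(2^{b_t−1}−1)²`
with `α = 1 − 2μη + Lμη²` (assumed to lie in `(0,1)`). -/
theorem dqsgd_convergence_bound {d W : ℕ} (hW : 0 < W)
    (F : EuclideanSpace ℝ (Fin d) → ℝ) (hF : Differentiable ℝ F)
    (L μ η σ : ℝ) (hL0 : 0 < L)
    (hL : ∀ x y, ‖gradient F x - gradient F y‖ ≤ L * ‖x - y‖)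
    (hμ : 0 < μ) (hconv : ConvexOn ℝ Set.univ fun x => F x - μ / 2 * ⟪x, x⟫)
    (xstar : EuclideanSpace ℝ (Fin d)) (hmin : ∀ x, F xstar ≤ F x)
    (hη : 0 < η) (α : ℝ) (hα : α = 1 - 2 * μ * η + L * μ * η ^ 2)
    (hα0 : 0 < α) (hα1 : α < 1)
    (T : ℕ) (b : ℕ → ℕ) (hb : ∀ t, 2 ≤ b t)
    (Gbarsq : ℕ → ℝ) (hGbarsq : ∀ t, 0 ≤ Gbarsq t)
    {Ω : Type*} [MeasurableSpace Ω] (P : Measure Ω) [IsProbabilityMeasure P]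
    -- the iterates `x_t` and the aggregated gradients `ĝ_t`
    (X G : Ω → ℕ → EuclideanSpace ℝ (Fin d)) (x0 : EuclideanSpace ℝ (Fin d))
    (hX0 : ∀ ω, X ω 0 = x0)
    (hupdate : ∀ ω t, X ω (t + 1) = X ω t - η • G ω t)
    (hXmeas : ∀ t, Measurable fun ω => X ω t)
    (hGL2 : ∀ t, MemLp (fun ω => G ω t) 2 P)
    (hFX : ∀ t, Integrable (fun ω => F (X ω t)) P)
    (hGmean : ∀ t, P[fun ω => G ω t|MeasurableSpace.comap (fun ω => X ω t) inferInstance]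
      =ᵐ[P] fun ω => gradient F (X ω t))
    (hGsq : ∀ t,
      P[fun ω => ‖G ω t‖ ^ 2|MeasurableSpace.comap (fun ω => X ω t) inferInstance]
        ≤ᵐ[P] fun ω => ‖gradient F (X ω t)‖ ^ 2 + σ ^ 2 / W +
          d * Gbarsq t / (4 * W * ((2 : ℝ) ^ (b t - 1) - 1) ^ 2)) :
    (∫ ω, F (X ω T) ∂P) - F xstar ≤
      α ^ T * (F x0 - F xstar) +
        L * η ^ 2 * σ ^ 2 / (2 * W) * ((1 - α ^ T) / (1 - α)) +
        L * d * η ^ 2 / (8 * W) *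
          ∑ t ∈ range T, α ^ (T - 1 - t) * Gbarsq t / ((2 : ℝ) ^ (b t - 1) - 1) ^ 2 :=
  dqsgd_convergence_bound_general F hF L μ η σ hL0 hL hμ hconv xstar hη α hα hα0 hα1 T b Gbarsq P X
    G x0 hX0 hupdate hXmeas hGL2 hFX hGmean hGsq
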